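/- Let G' be a finite multigraph whose vertex set is partitioned into a set W and a nonempty set H, and let Δ, Z, d, p be real numbers such that: every vertex of H is incident (with multiplicity) to at most Δ edges whose other endpoint lies in W; every vertex of W is incident to at most Z edges whose other endpoint lies in H, and to at most d edges whose other endpoint lies in W; and for every nonempty subset S ⊆ H with 2·|S| ≤ |H|, the number of edges (with multiplicity) with one endpoint in S and the other in H ∖ S is at least p·|S|. If p > 3Δ + 3Z + d, then in every linear arrangement of G' of minimum cost, the set H is consecutive. -/

import Mathlib

open Finset

/-- Number of edges (with multiplicity) of the multigraph with edge family `E` that are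
incident to `v` and whose other endpoint lies in `S`. -/
def degTo {V : Type*} [DecidableEq V] {ι : Type*} [Fintype ι]
    (E : ι → V × V) (v : V) (S : Finset V) : ℕ :=
  (Finset.univ.filter fun i =>
    ((E i).1 = v ∧ (E i).2 ∈ S) ∨ ((E i).2 = v ∧ (E i).1 ∈ S)).card

/-- Number of edges (with multiplicity) with one endpoint in `S` and the other in `T`. -/
def edgesBetween {V : Type*} [DecidableEq V] {ι : Type*} [Fintype ι]
    (E : ι → V × V) (S T : Finset V) : ℕ :=
  (Finset.univ.filter fun i =>
    ((E i).1 ∈ S ∧ (E i).2 ∈ T) ∨ ((E i).1 ∈ T ∧ (E i).2 ∈ S)).card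

/-- Cost of a placement `f : V → ℤ` of the vertices of the multigraph with edge family `E`
on the integer line: the sum over the edges of the distance between the two endpoints. -/
def mcost {V : Type*} {ι : Type*} [Fintype ι] (E : ι → V × V) (f : V → ℤ) : ℤ :=
  ∑ i, |f (E i).1 - f (E i).2|

/-! Suppose `H` is not consecutive in an optimal arrangement `π`. Starting at the leftmost
vertex of `H`, let `[i, j)` be the maximal run of positions occupied by `H`, with `w ∉ H` at
position `j`, and let `S` be the vertices of the run. Moving `w` to position `i` and shifting
`S` one step to the right lengthens the edges from `S` to the left by one (at most `|S| Δ` of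
them, since they go to `W`), lengthens the edges at `w` by at most `|S|` (at most `Z + d` of
them), and shortens by one each of the at least `p |S|` edges from `S` to `H \ S`, which all
lie to the right of `j`. Optimality therefore forces `2 |S| > |H|`. The same holds for the
run at the right end of `H` (reverse the arrangement), and the two runs are disjoint. -/

theorem Fin.val_cycleIcc {n : ℕ} {i j : Fin n} (k : Fin n) :
    (Fin.cycleIcc i j k : ℕ) =
      if k < i ∨ j < k then (k : ℕ) else if k = j then (i : ℕ) else k + 1 := by
  have : NeZero n := NeZero.of_pos k.pos
  rcases lt_or_ge k i with hki | hik
  · simp [Fin.cycleIcc_of_lt hki, hki]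
  rcases lt_or_ge j k with hjk | hkj
  · simp [Fin.cycleIcc_of_gt hjk, hjk]
  rw [Fin.cycleIcc_of_le_of_le hik hkj, if_neg (not_or.2 ⟨hik.not_gt, hkj.not_gt⟩)]
  split_ifs with hkj'
  · rfl
  · have := lt_of_le_of_ne hkj hkj'
    exact Fin.val_add_one_of_lt' (by omega)

theorem Fin.abs_cycleIcc_sub_cycleIcc_add_le {n : ℕ} {i j : Fin n} (hij : i ≤ j) (x y : Fin n) :
    |((Fin.cycleIcc i j x : ℕ) : ℤ) - (Fin.cycleIcc i j y : ℕ)| +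
        (if (i ≤ x ∧ x < j) ∧ j < y ∨ j < x ∧ i ≤ y ∧ y < j then 1 else 0) ≤
      |((x : ℕ) : ℤ) - (y : ℕ)| +
        (if (i ≤ x ∧ x < j) ∧ y < i ∨ x < i ∧ i ≤ y ∧ y < j then 1 else 0) +
        (((j : ℕ) : ℤ) - (i : ℕ)) * (if x = j ∨ y = j then 1 else 0) := by
  rw [Fin.val_cycleIcc, Fin.val_cycleIcc]
  simp only [Int.abs_eq_natAbs, Fin.ext_iff]
  split_ifs <;> omega

section

variable {V : Type*} {ι : Type*} [Fintype ι] (E : ι → V × V) {n : ℕ}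

theorem edgesBetween_mono_right [DecidableEq V] {S T T' : Finset V} (h : T ⊆ T') :
    edgesBetween E S T ≤ edgesBetween E S T' :=
  card_le_card <| monotone_filter_right _ fun _ _ =>
    Or.imp (And.imp_right (@h _)) (And.imp_left (@h _))

theorem edgesBetween_le_sum_degTo [DecidableEq V] (S T : Finset V) :
    edgesBetween E S T ≤ ∑ u ∈ S, degTo E u T := by
  classical
  refine (card_le_card fun k hk => ?_).trans card_biUnion_le
  simp only [mem_filter, mem_univ, true_and, mem_biUnion] at hk ⊢
  rcases hk with ⟨h₁, h₂⟩ | ⟨h₁, h₂⟩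
  · exact ⟨_, h₁, Or.inl ⟨rfl, h₂⟩⟩
  · exact ⟨_, h₂, Or.inr ⟨rfl, h₁⟩⟩

theorem degTo_univ_le [Fintype V] [DecidableEq V] (v : V) (T : Finset V) :
    degTo E v univ ≤ degTo E v T + degTo E v Tᶜ := by
  classical
  refine (card_le_card fun k hk => ?_).trans (card_union_le _ _)
  simp only [mem_filter, mem_univ, true_and, mem_union, mem_compl] at hk ⊢
  tauto

abbrev arrangementCost (π : V ≃ Fin n) : ℤ := mcost E fun v => ((π v : ℕ) : ℤ)

def IsOptimalArrangement (π : V ≃ Fin n) : Prop :=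
  ∀ π' : V ≃ Fin n, arrangementCost E π ≤ arrangementCost E π'

theorem arrangementCost_trans_revPerm (π : V ≃ Fin n) :
    arrangementCost E (π.trans Fin.revPerm) = arrangementCost E π := by
  refine sum_congr rfl fun k _ => ?_
  simp only [Equiv.trans_apply, Fin.revPerm_apply, Fin.val_rev, Int.abs_eq_natAbs]
  omega

theorem arrangementCost_trans_cycleIcc_add_le [Fintype V] [DecidableEq V] (π : V ≃ Fin n)
    {i : Fin n} {w : V} (hi : i ≤ π w) :
    arrangementCost E (π.trans (Fin.cycleIcc i (π w))) +
        edgesBetween E ((Ico i (π w)).map π.symm.toEmbedding)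
          ((Ioi (π w)).map π.symm.toEmbedding) ≤
      arrangementCost E π +
        edgesBetween E ((Ico i (π w)).map π.symm.toEmbedding)
          ((Iio i).map π.symm.toEmbedding) +
        (((π w : ℕ) : ℤ) - (i : ℕ)) * degTo E w univ := by
  simp only [arrangementCost, mcost, edgesBetween, degTo, card_filter, Nat.cast_sum,
    Nat.cast_ite, Nat.cast_one, Nat.cast_zero, mem_map_equiv, Equiv.symm_symm, mem_Ico,
    mem_Iio, mem_Ioi, mem_univ, and_true, Equiv.trans_apply, mul_sum, ← sum_add_distrib]
  refine sum_le_sum fun k _ => ?_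
  simpa only [π.apply_eq_iff_eq] using
    Fin.abs_cycleIcc_sub_cycleIcc_add_le hi (π (E k).1) (π (E k).2)

variable {E}

theorem IsOptimalArrangement.trans_revPerm {π : V ≃ Fin n} (h : IsOptimalArrangement E π) :
    IsOptimalArrangement E (π.trans Fin.revPerm) :=
  fun π' => (arrangementCost_trans_revPerm E π).trans_le (h π')

theorem exists_sandwich_of_not_consecutive (π : V ≃ Fin n) (H : Finset V)
    (h : ¬ ∃ a : ℕ, ∀ v, v ∈ H ↔ a ≤ (π v : ℕ) ∧ (π v : ℕ) < a + #H) :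
    ∃ u w u', u ∈ H ∧ w ∉ H ∧ u' ∈ H ∧ π u < π w ∧ π w < π u' := by
  contrapose! h
  rcases H.eq_empty_or_nonempty with rfl | hne
  · exact ⟨0, by simp⟩
  obtain ⟨u, hu, hmin⟩ := H.exists_min_image (fun v => π v) hne
  obtain ⟨u', hu', hmax⟩ := H.exists_max_image (fun v => π v) hne
  have hmem : ∀ v, v ∈ H ↔ π u ≤ π v ∧ π v ≤ π u' := by
    refine fun v => ⟨fun hv => ⟨hmin v hv, hmax v hv⟩, fun ⟨h₁, h₂⟩ => ?_⟩
    by_contra hv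
    have hlt : π u < π v := lt_of_le_of_ne h₁ fun he => hv (π.injective he ▸ hu)
    exact hv (π.injective (le_antisymm h₂ (h u v u' hu hv hu' hlt)) ▸ hu')
  have hcard : #H = (π u' : ℕ) + 1 - π u := by
    rw [← Fin.card_Icc, ← card_map π.symm.toEmbedding]
    congr 1
    ext v
    simp [hmem]
  exact ⟨π u, fun v => by rw [hmem v, hcard]; omega⟩

theorem exists_leftmost_run [Fintype V] {π : V ≃ Fin n} {H : Finset V} {u w : V}
    (hu : u ∈ H) (hw : w ∉ H) (huw : π u < π w) :
    ∃ i w₀, (∀ v ∈ H, i ≤ π v) ∧ (Ico i (π w₀)).map π.symm.toEmbedding ⊆ H ∧ w₀ ∉ H ∧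
      i < π w₀ ∧ π w₀ ≤ π w := by
  classical
  obtain ⟨u₀, hu₀, hmin⟩ := H.exists_min_image (fun v => π v) ⟨u, hu⟩
  have hu₀w : π u₀ ≤ π w := (hmin u hu).trans huw.le
  obtain ⟨w₀, hw₀, hmin'⟩ := (univ.filter fun v => v ∉ H ∧ π u₀ ≤ π v).exists_min_image
    (fun v => π v) ⟨w, by simp [hw, hu₀w]⟩
  simp only [mem_filter, mem_univ, true_and] at hw₀ hmin'
  refine ⟨π u₀, w₀, hmin, fun v hv => ?_, hw₀.1,
    lt_of_le_of_ne hw₀.2 fun he => hw₀.1 (π.injective he ▸ hu₀), hmin' w ⟨hw, hu₀w⟩⟩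
  simp only [mem_map_equiv, Equiv.symm_symm, mem_Ico] at hv
  by_contra hvH
  exact (hmin' v ⟨hvH, hv.1⟩).not_gt hv.2

theorem card_lt_two_mul_card_run [Fintype V] [DecidableEq V] {H : Finset V} {Δ Z d p : ℝ}
    (hΔ : ∀ v ∈ H, (degTo E v Hᶜ : ℝ) ≤ Δ)
    (hZ : ∀ v ∈ Hᶜ, (degTo E v H : ℝ) ≤ Z)
    (hd : ∀ v ∈ Hᶜ, (degTo E v Hᶜ : ℝ) ≤ d)
    (hexp : ∀ S : Finset V, S ⊆ H → S.Nonempty → 2 * S.card ≤ H.card →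
      p * S.card ≤ (edgesBetween E S (H \ S) : ℝ))
    (hp : Δ + Z + d < p) {π : V ≃ Fin n} (hopt : IsOptimalArrangement E π) {i : Fin n} {w : V}
    (hmin : ∀ v ∈ H, i ≤ π v) (hrun : (Ico i (π w)).map π.symm.toEmbedding ⊆ H) (hw : w ∉ H)
    (hi : i < π w) :
    #H < 2 * #((Ico i (π w)).map π.symm.toEmbedding) := by
  have hshift := arrangementCost_trans_cycleIcc_add_le E π hi.le
  have hcmp := hopt (π.trans (Fin.cycleIcc i (π w)))
  set S := (Ico i (π w)).map π.symm.toEmbedding with hS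
  set L := (Iio i).map π.symm.toEmbedding with hL
  set R := (Ioi (π w)).map π.symm.toEmbedding with hR
  by_contra! hsmall
  have hSne : S.Nonempty := ⟨π.symm i, by simp [S, hi]⟩
  have hScard : (#S : ℤ) = ((π w : ℕ) : ℤ) - (i : ℕ) := by
    rw [hS, card_map, Fin.card_Ico]
    omega
  have hHS : H \ S ⊆ R := fun v hv => by
    simp only [mem_sdiff, hS, hR, mem_map_equiv, Equiv.symm_symm, mem_Ico, mem_Ioi] at hv ⊢
    obtain ⟨hvH, hvS⟩ := hv
    have hvw : π v ≠ π w := fun he => hw (π.injective he ▸ hvH)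
    have := hmin v hvH
    omega
  have hLH : L ⊆ Hᶜ := fun v hv => mem_compl.2 fun hvH => by
    simp only [hL, mem_map_equiv, Equiv.symm_symm, mem_Iio] at hv
    exact (hmin v hvH).not_gt hv
  have hB : p * #S ≤ edgesBetween E S R :=
    (hexp S hrun hSne hsmall).trans (Nat.cast_le.2 (edgesBetween_mono_right E hHS))
  have hA : (edgesBetween E S L : ℝ) ≤ #S * Δ :=
    calc (edgesBetween E S L : ℝ)
        ≤ ∑ u ∈ S, (degTo E u Hᶜ : ℝ) := by
          exact_mod_cast (edgesBetween_mono_right E hLH).trans (edgesBetween_le_sum_degTo E S Hᶜ)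
      _ ≤ ∑ _u ∈ S, Δ := sum_le_sum fun u hu => hΔ u (hrun hu)
      _ = #S * Δ := by rw [sum_const, nsmul_eq_mul]
  have hC : (degTo E w univ : ℝ) ≤ Z + d := by
    have hwc : w ∈ Hᶜ := mem_compl.2 hw
    have := hZ w hwc
    have := hd w hwc
    have : (degTo E w univ : ℝ) ≤ degTo E w H + degTo E w Hᶜ := by
      exact_mod_cast degTo_univ_le E w H
    linarith
  have hgain : (edgesBetween E S R : ℝ) ≤ edgesBetween E S L + #S * degTo E w univ := by
    rw [← hScard] at hshift
    exact_mod_cast (show (edgesBetween E S R : ℤ) ≤ edgesBetween E S L + #S * degTo E w univ by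
      linarith)
  have hS1 : (1 : ℝ) ≤ #S := by exact_mod_cast hSne.card_pos
  nlinarith [mul_le_mul_of_nonneg_left hC (by positivity : (0 : ℝ) ≤ #S)]

theorem exists_large_run_below [Fintype V] [DecidableEq V] {H : Finset V} {Δ Z d p : ℝ}
    (hΔ : ∀ v ∈ H, (degTo E v Hᶜ : ℝ) ≤ Δ)
    (hZ : ∀ v ∈ Hᶜ, (degTo E v H : ℝ) ≤ Z)
    (hd : ∀ v ∈ Hᶜ, (degTo E v Hᶜ : ℝ) ≤ d)
    (hexp : ∀ S : Finset V, S ⊆ H → S.Nonempty → 2 * S.card ≤ H.card →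
      p * S.card ≤ (edgesBetween E S (H \ S) : ℝ))
    (hp : Δ + Z + d < p) {π : V ≃ Fin n} (hopt : IsOptimalArrangement E π) {u w : V}
    (hu : u ∈ H) (hw : w ∉ H) (huw : π u < π w) :
    ∃ S ⊆ H, (∀ v ∈ S, π v < π w) ∧ #H < 2 * #S := by
  obtain ⟨i, w₀, hmin, hrun, hw₀, hi, hw₀w⟩ := exists_leftmost_run hu hw huw
  refine ⟨_, hrun, fun v hv => ?_, card_lt_two_mul_card_run hΔ hZ hd hexp hp hopt hmin hrun hw₀ hi⟩
  simp only [mem_map_equiv, Equiv.symm_symm, mem_Ico] at hv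
  exact hv.2.trans_le hw₀w

end

theorem expander_block_consecutive
    {V : Type*} [Fintype V] [DecidableEq V] {ι : Type*} [Fintype ι]
    (E : ι → V × V) (H : Finset V)
    (Δ Z d p : ℝ)
    (hΔ : ∀ v ∈ H, (degTo E v Hᶜ : ℝ) ≤ Δ)
    (hZ : ∀ v ∈ Hᶜ, (degTo E v H : ℝ) ≤ Z)
    (hd : ∀ v ∈ Hᶜ, (degTo E v Hᶜ : ℝ) ≤ d)
    (hexp : ∀ S : Finset V, S ⊆ H → S.Nonempty → 2 * S.card ≤ H.card →
      p * S.card ≤ (edgesBetween E S (H \ S) : ℝ))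
    (hineq : 3 * Δ + 3 * Z + d < p)
    (π : V ≃ Fin (Fintype.card V))
    (hopt : ∀ π' : V ≃ Fin (Fintype.card V),
      mcost E (fun v => ((π v : ℕ) : ℤ)) ≤ mcost E (fun v => ((π' v : ℕ) : ℤ))) :
    ∃ a : ℕ, ∀ v, v ∈ H ↔ a ≤ (π v : ℕ) ∧ (π v : ℕ) < a + H.card := by
  by_contra hblock
  obtain ⟨u, w, u', hu, hw, hu', huw, hwu'⟩ := exists_sandwich_of_not_consecutive π H hblock
  have hp : Δ + Z + d < p := by
    have := (Nat.cast_nonneg _).trans (hΔ u hu)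
    have := (Nat.cast_nonneg _).trans (hZ w (mem_compl.2 hw))
    linarith
  have hopt' : IsOptimalArrangement E π := hopt
  obtain ⟨S₁, hS₁H, hS₁w, hS₁⟩ := exists_large_run_below hΔ hZ hd hexp hp hopt' hu hw huw
  obtain ⟨S₂, hS₂H, hS₂w, hS₂⟩ := exists_large_run_below hΔ hZ hd hexp hp
    hopt'.trans_revPerm hu' hw (Fin.rev_lt_rev.2 hwu')
  have hdisj : Disjoint S₁ S₂ := disjoint_left.2 fun v h₁ h₂ =>
    (hS₁w v h₁).not_gt (Fin.rev_lt_rev.1 (hS₂w v h₂))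
  have := card_le_card (union_subset hS₁H hS₂H)
  rw [card_union_of_disjoint hdisj] at this
  omega
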